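/- arXiv:2603.05847 — 6 statements merged into one kernel-verified Lean document; each statement's English description precedes it below -/
import Mathlib

section
/- Let G = H × K be a direct product of finite groups, and let A_0, A_i ⊆ H \ {1}, B_0, B_i ⊆ K \ {1}. If φ : H → H is a graph isomorphism from Cay(H, A_0) to Cay(H, A_i) and ψ : K → K is a graph isomorphism from Cay(K, B_0) to Cay(K, B_i), then the map ρ(h,k) = (φ(h), ψ(k)) is a graph isomorphism from Cay(G, A_0·K ∪ B_0) to Cay(G, A_i·K ∪ B_i). -/
/-- The Cayley graph of a group `G` with connection set `S`: `h` and `g` are adjacent iff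
`g * h⁻¹ ∈ S` (symmetrized; for inverse-closed `S` this is the usual Cayley graph). -/
def cayley {G : Type*} [Group G] (S : Set G) : SimpleGraph G :=
  SimpleGraph.fromRel (fun h g => g * h⁻¹ ∈ S)

lemma prod_adj {H K : Type*} [Group H] [Group K] (A : Set H) (B : Set K)
    (hA : A ⊆ {h : H | h ≠ 1}) (p q : H × K) :
    (cayley ({x : H × K | x.1 ∈ A} ∪ {x : H × K | x.1 = 1 ∧ x.2 ∈ B})).Adj p q ↔
      (cayley A).Adj p.1 q.1 ∨ (p.1 = q.1 ∧ (cayley B).Adj p.2 q.2) := by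
  simp only [cayley, SimpleGraph.fromRel_adj, Set.mem_union, Set.mem_setOf_eq,
    ne_eq, Prod.ext_iff, not_and, mul_inv_eq_one, Prod.fst_mul, Prod.fst_inv,
    Prod.snd_mul, Prod.snd_inv]
  constructor
  · rintro ⟨hpq, h⟩
    rcases h with (h | ⟨h1, h2⟩) | (h | ⟨h1, h2⟩)
    · refine Or.inl ⟨fun e => hA h ?_, Or.inl h⟩
      simp [e]
    · exact Or.inr ⟨h1.symm, fun e => hpq h1.symm e, Or.inl h2⟩
    · refine Or.inl ⟨fun e => hA h ?_, Or.inr h⟩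
      simp [e]
    · exact Or.inr ⟨h1, fun e => hpq h1 e, Or.inr h2⟩
  · rintro (⟨h1, h⟩ | ⟨h1, h2, h⟩)
    · rcases h with h | h
      · exact ⟨fun e _ => h1 e, Or.inl (Or.inl h)⟩
      · exact ⟨fun e _ => h1 e, Or.inr (Or.inl h)⟩
    · rcases h with h | h
      · exact ⟨fun _ => h2, Or.inl (Or.inr ⟨h1.symm, h⟩)⟩
      · exact ⟨fun _ => h2, Or.inr (Or.inr ⟨h1, h⟩)⟩

/-- If `φ` is an isomorphism `Cay(H, A₀) ≅ Cay(H, Aᵢ)` and `ψ` an isomorphism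
`Cay(K, B₀) ≅ Cay(K, Bᵢ)`, then `ρ(h,k) = (φ h, ψ k)` is an isomorphism
`Cay(H × K, A₀K ∪ B₀) ≅ Cay(H × K, AᵢK ∪ Bᵢ)`. -/
theorem stmt1 {H K : Type*} [Group H] [Group K] [Fintype H] [Fintype K]
    (A₀ Aᵢ : Set H) (B₀ Bᵢ : Set K)
    (hA₀ : A₀ ⊆ {h : H | h ≠ 1}) (hAᵢ : Aᵢ ⊆ {h : H | h ≠ 1})
    (hB₀ : B₀ ⊆ {x : K | x ≠ 1}) (hBᵢ : Bᵢ ⊆ {x : K | x ≠ 1})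
    (hA₀inv : A₀⁻¹ = A₀) (hAᵢinv : Aᵢ⁻¹ = Aᵢ)
    (hB₀inv : B₀⁻¹ = B₀) (hBᵢinv : Bᵢ⁻¹ = Bᵢ)
    (φ : cayley A₀ ≃g cayley Aᵢ) (ψ : cayley B₀ ≃g cayley Bᵢ) :
    ∀ p q : H × K,
      (cayley ({x : H × K | x.1 ∈ A₀} ∪ {x : H × K | x.1 = 1 ∧ x.2 ∈ B₀})).Adj p q ↔
      (cayley ({x : H × K | x.1 ∈ Aᵢ} ∪ {x : H × K | x.1 = 1 ∧ x.2 ∈ Bᵢ})).Adj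
        (φ p.1, ψ p.2) (φ q.1, ψ q.2) := by
  intro p q
  rw [prod_adj A₀ B₀ hA₀, prod_adj Aᵢ Bᵢ hAᵢ]
  simp only [φ.map_adj_iff, ψ.map_adj_iff, EmbeddingLike.apply_eq_iff_eq]
end

section
/- Let G be a finite group, r a prime, and suppose there exist τ ∈ Aut(G) and an inverse-closed subset S ⊆ G \ {1} such that {S, S^τ, …, S^{τ^{r-1}}} is a partition of G \ {1}. Write o(τ) = r^e·m with gcd(m, r) = 1, and set σ := τ^m. Then {S, S^σ, S^{σ²}, …, S^{σ^{r-1}}} = {S, S^τ, …, S^{τ^{r-1}}} as collections of sets; in particular {S, S^σ, …, S^{σ^{r-1}}} is a partition of G \ {1} and σ has order a power of r. -/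
/-!
Since `τ` permutes `G \ {1}`, applying it to the partition `S, S^τ, …, S^{τ^{r-1}}` yields the
partition `S^τ, …, S^{τ^r}` of the same set; the two share the blocks `S^τ, …, S^{τ^{r-1}}`, so
`S^{τ^r} = S`. Hence `S^{τ^k}` depends only on `k mod r`, and `S^{σ^i} = S^{τ^{mi mod r}}`, where
`i ↦ mi mod r` permutes the residues because `m` is coprime to `r`.
-/

open Function Set

theorem MulAut.coe_pow_eq_iterate {M : Type*} [Mul M] (τ : MulAut M) (n : ℕ) :
    ⇑(τ ^ n) = (⇑τ)^[n] :=
  congrArg DFunLike.coe (map_pow (MulAut.toPerm M) τ n)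

theorem isPeriodicPt_image_of_pairwise_disjoint {α : Type*} {f : α → α} (hf : Injective f)
    {S : Set α} {r : ℕ}
    (hdisj : Pairwise fun i j : Fin r => Disjoint (f^[i] '' S) (f^[j] '' S))
    (hinv : f '' ⋃ i : Fin r, f^[i] '' S = ⋃ i : Fin r, f^[i] '' S) :
    IsPeriodicPt (image f) r S := by
  obtain _ | n := r
  · rfl
  rw [IsPeriodicPt, IsFixedPt, ← image_iterate_eq]
  set V := ⋃ i : Fin n, f^[i + 1] '' S
  have hS : S ∪ V = ⋃ i : Fin (n + 1), f^[i] '' S := by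
    simp [iUnion_fin_add_one_eq_iUnion_succ, V, comp_def]
  have hfS : V ∪ f^[n + 1] '' S = f '' ⋃ i : Fin (n + 1), f^[i] '' S := by
    simp only [iUnion_fin_add_one_eq_iUnion_castSucc, image_union, image_iUnion, ← image_comp,
      comp_apply, Fin.val_castSucc, Fin.val_last, ← iterate_succ_apply']
    rfl
  have hSV : Disjoint S V := by
    simp only [V, disjoint_iUnion_right]
    intro i
    simpa using hdisj (Fin.succ_ne_zero i).symm
  have hVfS : Disjoint V (f^[n + 1] '' S) := by
    simp only [V, disjoint_iUnion_left, iterate_succ', image_comp]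
    intro i
    exact (disjoint_image_iff hf).2 (hdisj (Fin.castSucc_lt_last i).ne)
  calc f^[n + 1] '' S = (V ∪ f^[n + 1] '' S) \ V := hVfS.sup_sdiff_cancel_left.symm
    _ = (S ∪ V) \ V := by rw [hfS, hinv, hS]
    _ = S := hSV.sup_sdiff_cancel_right

theorem bijective_mul_mod_of_coprime {r m : ℕ} (hm : m.Coprime r) :
    Bijective fun i : Fin r => (⟨m * i % r, Nat.mod_lt _ i.pos⟩ : Fin r) := by
  refine Finite.injective_iff_bijective.1 fun i j hij => Fin.ext ?_
  have : m * i ≡ m * j [MOD r] := congrArg Fin.val hij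
  simpa [Nat.ModEq, Nat.mod_eq_of_lt] using Nat.ModEq.cancel_left_of_coprime hm.symm this

theorem MulAut.image_setOf_ne_one {G : Type*} [Group G] (τ : MulAut G) :
    ⇑τ '' {g : G | g ≠ 1} = {g : G | g ≠ 1} := by
  change ⇑τ '' {1}ᶜ = {1}ᶜ
  rw [image_compl_eq τ.bijective, image_singleton, map_one]

theorem stmt5_general {G : Type*} [Group G] (r e m : ℕ)
    (τ : MulAut G) (S : Set G)
    (hpair : Pairwise fun i j : Fin r =>
      Disjoint ((⇑(τ ^ (i : ℕ))) '' S) ((⇑(τ ^ (j : ℕ))) '' S))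
    (hunion : (⋃ i : Fin r, (⇑(τ ^ (i : ℕ))) '' S) = {g : G | g ≠ 1})
    (hord : orderOf τ = r ^ e * m) (hm : Nat.Coprime m r) :
    (Set.range (fun i : Fin r => (⇑((τ ^ m) ^ (i : ℕ))) '' S)
        = Set.range (fun i : Fin r => (⇑(τ ^ (i : ℕ))) '' S)) ∧
    (Pairwise fun i j : Fin r =>
      Disjoint ((⇑((τ ^ m) ^ (i : ℕ))) '' S) ((⇑((τ ^ m) ^ (j : ℕ))) '' S)) ∧
    (⋃ i : Fin r, (⇑((τ ^ m) ^ (i : ℕ))) '' S) = {g : G | g ≠ 1} ∧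
    (∃ f : ℕ, orderOf (τ ^ m) = r ^ f) := by
  have hper : IsPeriodicPt (image τ) r S := by
    simp only [MulAut.coe_pow_eq_iterate] at hpair hunion
    exact isPeriodicPt_image_of_pairwise_disjoint τ.injective hpair
      (by rw [hunion, τ.image_setOf_ne_one])
  obtain ⟨hinj, hsurj⟩ := bijective_mul_mod_of_coprime hm
  have hfamily : ∀ i : Fin r, ⇑((τ ^ m) ^ (i : ℕ)) '' S = ⇑(τ ^ (m * i % r)) '' S := by
    intro i
    simp only [← pow_mul, MulAut.coe_pow_eq_iterate, image_iterate_eq, hper.iterate_mod_apply]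
  have hrange : range (fun i : Fin r => ⇑((τ ^ m) ^ (i : ℕ)) '' S)
      = range (fun i : Fin r => ⇑(τ ^ (i : ℕ)) '' S) := by
    rw [← hsurj.range_comp fun i : Fin r => ⇑(τ ^ (i : ℕ)) '' S]
    exact congrArg range (funext hfamily)
  refine ⟨hrange, fun i j hij => ?_, ?_, ?_⟩
  · simp only [hfamily]
    exact hpair (hinj.ne hij)
  · rw [← sUnion_range, hrange, sUnion_range, hunion]
  · rcases eq_or_ne m 0 with rfl | hm0
    · exact ⟨0, by simp⟩
    · refine ⟨e, ?_⟩
      rw [orderOf_pow_of_dvd hm0 (hord ▸ dvd_mul_left m _), hord, Nat.mul_div_cancel _ hm0.bot_lt]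

/-- If `{S, S^τ, …, S^{τ^{r-1}}}` partitions `G \ {1}` (`r` prime, `S`
inverse-closed), and `o(τ) = r^e·m` with `gcd(m,r)=1`, then with `σ := τ^m` the collection
`{S, S^σ, …, S^{σ^{r-1}}}` coincides with `{S, S^τ, …, S^{τ^{r-1}}}`; in particular it is a
partition of `G \ {1}` and `σ` has order a power of `r`. -/
theorem stmt5 {G : Type*} [Group G] [Fintype G] (r e m : ℕ) (hr : r.Prime)
    (τ : MulAut G) (S : Set G) (hS1 : S ⊆ {g : G | g ≠ 1}) (hSinv : S⁻¹ = S)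
    (hpair : Pairwise fun i j : Fin r =>
      Disjoint ((⇑(τ ^ (i : ℕ))) '' S) ((⇑(τ ^ (j : ℕ))) '' S))
    (hunion : (⋃ i : Fin r, (⇑(τ ^ (i : ℕ))) '' S) = {g : G | g ≠ 1})
    (hord : orderOf τ = r ^ e * m) (hm : Nat.Coprime m r) :
    (Set.range (fun i : Fin r => (⇑((τ ^ m) ^ (i : ℕ))) '' S)
        = Set.range (fun i : Fin r => (⇑(τ ^ (i : ℕ))) '' S)) ∧
    (Pairwise fun i j : Fin r =>
      Disjoint ((⇑((τ ^ m) ^ (i : ℕ))) '' S) ((⇑((τ ^ m) ^ (j : ℕ))) '' S)) ∧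
    (⋃ i : Fin r, (⇑((τ ^ m) ^ (i : ℕ))) '' S) = {g : G | g ≠ 1} ∧
    (∃ f : ℕ, orderOf (τ ^ m) = r ^ f) :=
  stmt5_general r e m τ S hpair hunion hord hm
end

section
/- Let G be a finite group admitting a partition {S, S^τ, …, S^{τ^{r-1}}} of G \ {1} for some τ ∈ Aut(G), some inverse-closed S, and some r ≥ 2. Then τ is fixed-point-free, i.e., τ(g) = g implies g = 1. -/
/-- If `{S, S^τ, …, S^{τ^{r-1}}}` is a partition of `G \ {1}` for some
`τ ∈ Aut(G)`, inverse-closed `S`, and `r ≥ 2`, then `τ` is fixed-point-free. -/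
theorem stmt6 {G : Type*} [Group G] [Fintype G] (r : ℕ) (hr : 2 ≤ r)
    (τ : MulAut G) (S : Set G) (hSinv : S⁻¹ = S)
    (hne : ∀ i : Fin r, ((⇑(τ ^ (i : ℕ))) '' S).Nonempty)
    (hpair : Pairwise fun i j : Fin r =>
      Disjoint ((⇑(τ ^ (i : ℕ))) '' S) ((⇑(τ ^ (j : ℕ))) '' S))
    (hunion : (⋃ i : Fin r, (⇑(τ ^ (i : ℕ))) '' S) = {g : G | g ≠ 1}) :
    ∀ g : G, τ g = g → g = 1 := by
  intro g hg
  by_contra hg1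
  haveI : NeZero r := ⟨by omega⟩
  have hfix : ∀ n : ℕ, (τ ^ n) g = g := by
    intro n
    induction n with
    | zero => rfl
    | succ n ih => rw [pow_succ', MulAut.mul_apply, ih, hg]
  have hmem : g ∈ ⋃ i : Fin r, (⇑(τ ^ (i : ℕ))) '' S := by
    rw [hunion]; exact hg1
  obtain ⟨_, ⟨i, rfl⟩, s, hs, hgs⟩ := hmem
  have hsg : s = g := by
    have h2 : (τ ^ (i : ℕ)) s = (τ ^ (i : ℕ)) g := by rw [hgs, hfix]
    exact (τ ^ (i : ℕ)).injective h2
  subst hsg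
  have h01 : ((0 : Fin r) : ℕ) = 0 := rfl
  have h11 : ((1 : Fin r) : ℕ) = 1 := by
    simp [Fin.val_one', Nat.mod_eq_of_lt (by omega : 1 < r)]
  have h0 : s ∈ (⇑(τ ^ (((0 : Fin r)) : ℕ))) '' S := ⟨s, hs, by rw [h01, hfix]⟩
  have h1 : s ∈ (⇑(τ ^ (((1 : Fin r)) : ℕ))) '' S := ⟨s, hs, by rw [h11, hfix]⟩
  have hne01 : (0 : Fin r) ≠ 1 := by
    intro h
    have := congrArg Fin.val h
    rw [h01, h11] at this
    omega
  exact Set.disjoint_left.mp (hpair hne01) h0 h1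
end

section
/- Let G = H × K. Suppose there exist α ∈ Aut(H), β ∈ Aut(K), inverse-closed A ⊆ H \ {1} and B ⊆ K \ {1} such that {A, A^α, …, A^{α^{k-1}}} is a partition of H \ {1} and {B, B^β, …, B^{β^{k-1}}} is a partition of K \ {1}. Then with S := A·K ∪ B (identifying B with {(1,b)}) and σ := α × β ∈ Aut(G), the set S is inverse-closed and {S, S^σ, …, S^{σ^{k-1}}} is a partition of G \ {1}. -/
/-- If `H` is `k`-rotational via `(α, A)` and `K` is `k`-rotational via
`(β, B)`, then `G = H × K` is `k`-rotational via `σ = α × β` and `S = A·K ∪ B`. -/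
theorem stmt7 {H K : Type*} [Group H] [Group K] [Fintype H] [Fintype K] (k : ℕ)
    (α : MulAut H) (β : MulAut K) (A : Set H) (B : Set K)
    (hA1 : A ⊆ {h : H | h ≠ 1}) (hB1 : B ⊆ {x : K | x ≠ 1})
    (hAinv : A⁻¹ = A) (hBinv : B⁻¹ = B)
    (hApair : Pairwise fun i j : Fin k =>
      Disjoint ((⇑(α ^ (i : ℕ))) '' A) ((⇑(α ^ (j : ℕ))) '' A))
    (hAunion : (⋃ i : Fin k, (⇑(α ^ (i : ℕ))) '' A) = {h : H | h ≠ 1})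
    (hBpair : Pairwise fun i j : Fin k =>
      Disjoint ((⇑(β ^ (i : ℕ))) '' B) ((⇑(β ^ (j : ℕ))) '' B))
    (hBunion : (⋃ i : Fin k, (⇑(β ^ (i : ℕ))) '' B) = {x : K | x ≠ 1}) :
    ∀ (S : Set (H × K)) (σ : MulAut (H × K)),
      S = {p : H × K | p.1 ∈ A} ∪ {p : H × K | p.1 = 1 ∧ p.2 ∈ B} →
      σ = MulEquiv.prodCongr α β →
      S⁻¹ = S ∧
      (Pairwise fun i j : Fin k =>
        Disjoint ((⇑(σ ^ (i : ℕ))) '' S) ((⇑(σ ^ (j : ℕ))) '' S)) ∧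
      (⋃ i : Fin k, (⇑(σ ^ (i : ℕ))) '' S) = {p : H × K | p ≠ 1} := by
  intro S σ hS hσ
  subst hS hσ
  have hpow : ∀ (i : ℕ) (p : H × K),
      ((MulEquiv.prodCongr α β ^ i) p) = ((α ^ i) p.1, (β ^ i) p.2) := by
    intro i
    induction i with
    | zero => intro p; simp
    | succ n ih =>
      intro p
      rw [pow_succ, pow_succ, pow_succ, MulAut.mul_apply, MulAut.mul_apply,
        MulAut.mul_apply, ih]
      rfl
  have himg : ∀ i : ℕ,
      (⇑(MulEquiv.prodCongr α β ^ i)) ''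
          ({p : H × K | p.1 ∈ A} ∪ {p : H × K | p.1 = 1 ∧ p.2 ∈ B})
        = {p : H × K | p.1 ∈ (⇑(α ^ i)) '' A} ∪
          {p : H × K | p.1 = 1 ∧ p.2 ∈ (⇑(β ^ i)) '' B} := by
    intro i
    ext p
    constructor
    · rintro ⟨q, hq, rfl⟩
      rw [hpow]
      rcases hq with h | ⟨h1, h2⟩
      · exact Or.inl ⟨q.1, h, rfl⟩
      · exact Or.inr ⟨by simp [h1], q.2, h2, rfl⟩
    · rintro (⟨a, ha, hpa⟩ | ⟨h1, b, hb, hpb⟩)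
      · refine ⟨(a, (β ^ i).symm p.2), Or.inl ha, ?_⟩
        rw [hpow]
        exact Prod.ext hpa (MulEquiv.apply_symm_apply _ _)
      · refine ⟨(1, b), Or.inr ⟨rfl, hb⟩, ?_⟩
        rw [hpow]
        exact Prod.ext (by simp [h1]) hpb
  have hAmem : ∀ h : H, h ≠ 1 ↔ ∃ i : Fin k, h ∈ (⇑(α ^ (i : ℕ))) '' A := by
    intro h
    rw [show (h ≠ 1) = (h ∈ {h : H | h ≠ 1}) from rfl, ← hAunion, Set.mem_iUnion]
  have hBmem : ∀ x : K, x ≠ 1 ↔ ∃ i : Fin k, x ∈ (⇑(β ^ (i : ℕ))) '' B := by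
    intro x
    rw [show (x ≠ 1) = (x ∈ {x : K | x ≠ 1}) from rfl, ← hBunion, Set.mem_iUnion]
  refine ⟨?_, ?_, ?_⟩
  · ext p
    have h1 : p⁻¹.1 = p.1⁻¹ := rfl
    have h2 : p⁻¹.2 = p.2⁻¹ := rfl
    have hAi : ∀ a : H, a⁻¹ ∈ A ↔ a ∈ A := by
      intro a
      constructor
      · intro ha
        rw [← hAinv]; exact ha
      · intro ha
        rw [← hAinv] at ha; simpa using ha
    have hBi : ∀ b : K, b⁻¹ ∈ B ↔ b ∈ B := by
      intro b
      constructor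
      · intro hb
        rw [← hBinv]; exact hb
      · intro hb
        rw [← hBinv] at hb; simpa using hb
    simp only [Set.mem_inv, Set.mem_union, Set.mem_setOf_eq, h1, h2, hAi, hBi,
      inv_eq_one]
  · intro i j hij
    rw [himg, himg, Set.disjoint_left]
    rintro p (⟨a, ha, hpa⟩ | ⟨hp1, hb⟩) (⟨a', ha', hpa'⟩ | ⟨hp1', hb'⟩)
    · exact Set.disjoint_left.1 (hApair hij) ⟨a, ha, hpa⟩ ⟨a', ha', hpa'⟩
    · exact hA1 ha ((α ^ (i : ℕ)).injective (by rw [hpa, hp1', map_one]))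
    · exact hA1 ha' ((α ^ (j : ℕ)).injective (by rw [hpa', hp1, map_one]))
    · exact Set.disjoint_left.1 (hBpair hij) hb hb'
  · ext p
    simp only [Set.mem_iUnion, himg, Set.mem_union, Set.mem_setOf_eq]
    constructor
    · rintro ⟨i, ⟨a, ha, hpa⟩ | ⟨hp1, hb⟩⟩
      · intro hp
        have : p.1 = 1 := by rw [hp]; rfl
        exact hA1 ha ((α ^ (i : ℕ)).injective (by rw [hpa, this, map_one]))
      · intro hp
        have h2 : p.2 = 1 := by rw [hp]; rfl
        exact ((hBmem p.2).2 ⟨i, hb⟩) h2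
    · intro hp
      by_cases h1 : p.1 = 1
      · have h2 : p.2 ≠ 1 := by
          intro h2
          exact hp (Prod.ext h1 h2)
        obtain ⟨i, hi⟩ := (hBmem p.2).1 h2
        exact ⟨i, Or.inr ⟨h1, hi⟩⟩
      · obtain ⟨i, hi⟩ := (hAmem p.1).1 h1
        exact ⟨i, Or.inl hi⟩
end

section
/- Let G be a finite group with σ ∈ Aut(G) and inverse-closed S ⊆ G \ {1} such that {S, S^σ, …, S^{σ^{k-1}}} is a partition of G \ {1}. Let H be a nontrivial characteristic subgroup of G. Then, with A := H ∩ S, the restriction of σ to H is an automorphism of H, A is inverse-closed, and {A, A^σ, …, A^{σ^{k-1}}} is a partition of H \ {1}. -/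
namespace Subgroup.Characteristic

variable {G : Type*} [Group G] {H : Subgroup G} [H.Characteristic]

theorem image_eq (φ : G ≃* G) : φ '' H = H := by
  rw [← MulEquiv.coe_toMonoidHom, ← coe_map, characteristic_iff_map_eq.mp ‹_› φ]

theorem image_inter_eq (φ : G ≃* G) (T : Set G) :
    φ '' ((H : Set G) ∩ T) = (H : Set G) ∩ φ '' T := by
  rw [Set.image_inter φ.injective, image_eq]

end Subgroup.Characteristic

theorem stmt8_general {G : Type*} [Group G] (k : ℕ)
    (σ : MulAut G) (S : Set G) (hSinv : S⁻¹ = S)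
    (hpair : Pairwise fun i j : Fin k =>
      Disjoint ((⇑(σ ^ (i : ℕ))) '' S) ((⇑(σ ^ (j : ℕ))) '' S))
    (hunion : (⋃ i : Fin k, (⇑(σ ^ (i : ℕ))) '' S) = {g : G | g ≠ 1})
    (H : Subgroup G) [H.Characteristic] :
    (∀ h ∈ H, σ h ∈ H) ∧
    (((H : Set G) ∩ S)⁻¹ = (H : Set G) ∩ S) ∧
    (Pairwise fun i j : Fin k =>
      Disjoint ((⇑(σ ^ (i : ℕ))) '' ((H : Set G) ∩ S))
        ((⇑(σ ^ (j : ℕ))) '' ((H : Set G) ∩ S))) ∧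
    (⋃ i : Fin k, (⇑(σ ^ (i : ℕ))) '' ((H : Set G) ∩ S)) = (H : Set G) \ {1} := by
  refine ⟨fun h hh => (Subgroup.Characteristic.image_eq (H := H) σ).subset ⟨h, hh, rfl⟩,
    ?_, ?_, ?_⟩
  · rw [Set.inter_inv, inv_coe_set, hSinv]
  · exact fun i j hij => (hpair hij).mono (Set.image_mono Set.inter_subset_right)
      (Set.image_mono Set.inter_subset_right)
  · simp_rw [Subgroup.Characteristic.image_inter_eq, ← Set.inter_iUnion, hunion]
    rfl

/-- If `G` is `k`-rotational via `(σ, S)` and `H` is a nontrivial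
characteristic subgroup of `G`, then `σ` restricts to `H`, `A := H ∩ S` is inverse-closed,
and `{A, A^σ, …, A^{σ^{k-1}}}` is a partition of `H \ {1}`. -/
theorem stmt8 {G : Type*} [Group G] [Fintype G] (k : ℕ)
    (σ : MulAut G) (S : Set G) (hS1 : S ⊆ {g : G | g ≠ 1}) (hSinv : S⁻¹ = S)
    (hpair : Pairwise fun i j : Fin k =>
      Disjoint ((⇑(σ ^ (i : ℕ))) '' S) ((⇑(σ ^ (j : ℕ))) '' S))
    (hunion : (⋃ i : Fin k, (⇑(σ ^ (i : ℕ))) '' S) = {g : G | g ≠ 1})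
    (H : Subgroup G) [H.Characteristic] (hH : H ≠ ⊥) :
    (∀ h ∈ H, σ h ∈ H) ∧
    (((H : Set G) ∩ S)⁻¹ = (H : Set G) ∩ S) ∧
    (Pairwise fun i j : Fin k =>
      Disjoint ((⇑(σ ^ (i : ℕ))) '' ((H : Set G) ∩ S))
        ((⇑(σ ^ (j : ℕ))) '' ((H : Set G) ∩ S))) ∧
    (⋃ i : Fin k, (⇑(σ ^ (i : ℕ))) '' ((H : Set G) ∩ S)) = (H : Set G) \ {1} :=
  stmt8_general k σ S hSinv hpair hunion H
end

section
/- Let p be an odd prime, n ≥ 1, and k ≥ 2 an integer with 2k dividing p^n − 1. Then the elementary abelian group G = (ℤ/p)^n admits an automorphism σ of order a power of k such that both σ and σ² are fixed-point-free on G \ {0}. -/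
/-!
Identify `(ℤ/p)^n` with the additive group of `GF(p^n)`, whose unit group is cyclic of order
`p^n - 1`. Multiplication by a unit `u` of order `d` is an additive automorphism of order `d`,
and in a field `u^m x = x` with `u^m ≠ 1` forces `x = 0`. So it suffices to take
`d = k^e > 2` dividing `p^n - 1`: `e = 1` works unless `k = 2`, where `4 ∣ p^n - 1` gives `e = 2`;
then `u ≠ 1` and `u^2 ≠ 1`.
-/

theorem Nat.exists_pow_dvd_of_two_mul_dvd {k m : ℕ} (hk : 2 ≤ k) (hm : 2 * k ∣ m) :
    ∃ e, k ^ e ∣ m ∧ 2 < k ^ e := by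
  obtain rfl | hk := hk.eq_or_lt
  · exact ⟨2, hm, by norm_num⟩
  · exact ⟨1, (pow_one k).symm ▸ dvd_of_mul_left_dvd hm, by simpa using hk⟩

theorem IsCyclic.exists_orderOf_eq_of_dvd_natCard {G : Type*} [Group G] [Finite G] [IsCyclic G]
    {d : ℕ} (hd : d ∣ Nat.card G) : ∃ g : G, orderOf g = d := by
  obtain ⟨g, hg⟩ := IsCyclic.exists_ofOrder_eq_natCard (α := G)
  rw [← hg] at hd
  exact ⟨_, orderOf_pow_orderOf_div (hg ▸ Nat.card_pos.ne') hd⟩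

namespace AddAut

variable {A B : Type*}

def FixedPointFree [Add A] [Zero A] (σ : AddAut A) : Prop := ∀ a, σ a = a → a = 0

variable [AddGroup A] [AddGroup B]

theorem FixedPointFree.congr {σ : AddAut A} (hσ : σ.FixedPointFree) (e : A ≃+ B) :
    (AddAut.congr e σ).FixedPointFree := fun _ hb =>
  e.symm.map_eq_zero_iff.mp (hσ _ (e.eq_symm_apply.mpr hb))

theorem addOrderOf_congr (e : A ≃+ B) (σ : AddAut A) :
    addOrderOf (AddAut.congr e σ) = addOrderOf σ :=
  addOrderOf_injective (AddAut.congr e).toAddMonoidHom (AddAut.congr e).injective σ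

variable {R : Type*}

theorem mulLeft_injective [Semiring R] :
    Function.Injective (mulLeft : Rˣ →* Multiplicative (AddAut R)) := fun u v h => by
  ext
  have h1 : (u : R) * 1 = v * 1 := DFunLike.congr_fun (congrArg Multiplicative.toAdd h) 1
  simpa using h1

theorem addOrderOf_toAdd_mulLeft [Semiring R] (u : Rˣ) :
    addOrderOf (mulLeft u).toAdd = orderOf u := by
  rw [← orderOf_ofAdd_eq_addOrderOf, ofAdd_toAdd, orderOf_injective _ mulLeft_injective]

theorem nsmul_toAdd_mulLeft [Semiring R] (m : ℕ) (u : Rˣ) :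
    m • (mulLeft u).toAdd = (mulLeft (u ^ m)).toAdd := by
  rw [map_pow, toAdd_pow]

theorem fixedPointFree_toAdd_mulLeft [Ring R] [NoZeroDivisors R] {u : Rˣ} (hu : u ≠ 1) :
    (mulLeft u).toAdd.FixedPointFree := fun x hx => by
  have : ((u : R) - 1) * x = 0 := by
    rw [sub_mul, one_mul, sub_eq_zero]; exact hx
  exact (mul_eq_zero.mp this).resolve_left (sub_ne_zero.mpr (Units.val_eq_one.not.mpr hu))

end AddAut

theorem FiniteField.exists_addAut_addOrderOf_eq {F : Type*} [Field F] [Finite F] {d : ℕ}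
    (hd : d ∣ Nat.card Fˣ) :
    ∃ σ : AddAut F, addOrderOf σ = d ∧ ∀ m, ¬ d ∣ m → (m • σ).FixedPointFree := by
  obtain ⟨u, rfl⟩ := IsCyclic.exists_orderOf_eq_of_dvd_natCard hd
  refine ⟨_, AddAut.addOrderOf_toAdd_mulLeft u, fun m hm => ?_⟩
  rw [AddAut.nsmul_toAdd_mulLeft]
  exact AddAut.fixedPointFree_toAdd_mulLeft (mt orderOf_dvd_of_pow_eq_one hm)

theorem stmt9_general (p n k : ℕ) (hp : p.Prime) (hn : 1 ≤ n) (hk : 2 ≤ k)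
    (hdvd : 2 * k ∣ p ^ n - 1) :
    ∃ σ : AddAut (Fin n → ZMod p),
      (∃ e : ℕ, addOrderOf σ = k ^ e) ∧
      (∀ v : Fin n → ZMod p, σ v = v → v = 0) ∧
      (∀ v : Fin n → ZMod p, σ (σ v) = v → v = 0) := by
  have : Fact p.Prime := ⟨hp⟩
  have hn0 : n ≠ 0 := by omega
  obtain ⟨e, hke, h2⟩ := Nat.exists_pow_dvd_of_two_mul_dvd hk hdvd
  rw [← GaloisField.card p n hn0, ← Nat.card_units] at hke
  obtain ⟨σ, hord, hfree⟩ := FiniteField.exists_addAut_addOrderOf_eq hke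
  let E : GaloisField p n ≃+ (Fin n → ZMod p) := (LinearEquiv.ofFinrankEq _ _
    ((GaloisField.finrank p hn0).trans (Module.finrank_fin_fun _).symm)).toAddEquiv
  have hfree' m (hm : ¬ k ^ e ∣ m) : (AddAut.congr E (m • σ)).FixedPointFree :=
    (hfree m hm).congr E
  refine ⟨AddAut.congr E σ, ⟨e, by rw [AddAut.addOrderOf_congr, hord]⟩, ?_, ?_⟩
  · simpa [AddAut.FixedPointFree] using hfree' 1 (Nat.not_dvd_of_pos_of_lt one_pos (by omega))
  · simpa [AddAut.FixedPointFree, two_nsmul] using hfree' 2 (Nat.not_dvd_of_pos_of_lt two_pos h2)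

/-- For an odd prime `p`, `n ≥ 1`, and `k ≥ 2` with `2k ∣ p^n − 1`, the
elementary abelian group `(ℤ/p)^n` has an automorphism `σ` of order a power of `k` such
that both `σ` and `σ²` are fixed-point-free. -/
theorem stmt9 (p n k : ℕ) (hp : p.Prime) (hodd : Odd p) (hn : 1 ≤ n) (hk : 2 ≤ k)
    (hdvd : 2 * k ∣ p ^ n - 1) :
    ∃ σ : AddAut (Fin n → ZMod p),
      (∃ e : ℕ, addOrderOf σ = k ^ e) ∧
      (∀ v : Fin n → ZMod p, σ v = v → v = 0) ∧
      (∀ v : Fin n → ZMod p, σ (σ v) = v → v = 0) :=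
  stmt9_general p n k hp hn hk hdvd
end
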